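/- Let k be a field of characteristic p, where p ≥ 3 is a prime, L a Lie algebra over k, M a k-vector space, and φ : L → End_k(M) a k-linear Lie algebra homomorphism. Fix x ∈ L and v ∈ M, and suppose there exists x' ∈ L such that [x', z] = (ad x)^p(z) for all z ∈ L and φ(x') = φ(x)^p. Define for y ∈ L, w ∈ M the sequences y_0 = y, m_0 = w, y_{n+1} = [x, y_n], m_{n+1} = φ(x)(m_n) − φ(y_n)(v). Then for all y ∈ L and w ∈ M: y_p = [x', y] and m_p = φ(x')(w) − φ(y)( φ(x)^{p-1}(v) ). In other words, ad_{(x,v)}^p = ad_{(x', φ(x)^{p-1}(v))} on the semidirect product L ⋉ M. -/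

import Mathlib

attribute [local instance 100] LieRing.ofAssociativeRing

/-!
Let `A(a, v)` be the endomorphism `(m, t) ↦ (a m + t • v, 0)` of `M × k`. Then
`⁅A(a, v), A(b, w)⁆ = A(⁅a, b⁆, a w - b v)`, so `(y, w) ↦ A(φ y, w)` turns the recursion for
`(y_n, m_n)` into iterated commutators with `A(φ x, v)`. In characteristic `p` we have
`(ad A)^p = ad (A^p)` because left and right multiplication by `A` commute, and
`A(φ x, v)^p = A(φ x ^ p, φ(x)^(p-1) v)`; reading off the translation part gives `m_p`.
-/

theorem LieAlgebra.ad_pow_char {k A : Type*} [Field k] [Ring A] [Algebra k A] [Nontrivial A]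
    (p : ℕ) [Fact p.Prime] [CharP k p] (a : A) :
    LieAlgebra.ad k A a ^ p = LieAlgebra.ad k A (a ^ p) := by
  have : CharP (Module.End k A) p := charP_of_injective_algebraMap' k p
  rw [ad_eq_lmul_left_sub_lmul_right, Pi.sub_apply, Pi.sub_apply,
    sub_pow_char_of_commute p (LinearMap.commute_mulLeft_right a a),
    LinearMap.pow_mulLeft, LinearMap.pow_mulRight]

section AffineEnd

variable {k M : Type*} [Field k] [AddCommGroup M] [Module k M]

def affineEnd (a : Module.End k M) (v : M) : Module.End k (M × k) :=
  LinearMap.inl k M k ∘ₗ (a ∘ₗ LinearMap.fst k M k + (LinearMap.snd k M k).smulRight v)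

@[simp]
theorem affineEnd_apply (a : Module.End k M) (v : M) (m : M) (t : k) :
    affineEnd a v (m, t) = (a m + t • v, 0) := rfl

theorem lie_affineEnd (a b : Module.End k M) (v w : M) :
    ⁅affineEnd a v, affineEnd b w⁆ = affineEnd ⁅a, b⁆ (a w - b v) := by
  ext <;> simp [Ring.lie_def, smul_sub]

theorem affineEnd_pow (a : Module.End k M) (v : M) {n : ℕ} (hn : n ≠ 0) :
    affineEnd a v ^ n = affineEnd (a ^ n) ((a ^ (n - 1)) v) := by
  obtain ⟨n, rfl⟩ := Nat.exists_eq_add_one_of_ne_zero hn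
  clear hn
  rw [Nat.add_sub_cancel]
  induction n with
  | zero => simp
  | succ n ih =>
    rw [pow_succ', ih]
    ext <;> simp [Module.End.mul_apply, pow_succ' a (n + 1), pow_succ' a n]

theorem affineEnd_injective_right {a b : Module.End k M} {v w : M}
    (h : affineEnd a v = affineEnd b w) : v = w := by
  simpa using congrArg (fun f => (f (0, 1)).1) h

end AffineEnd

theorem stmt4_general {k : Type*} [Field k] {p : ℕ} (hp : p.Prime) [CharP k p]
    {L : Type*} [LieRing L] [LieAlgebra k L]
    {M : Type*} [AddCommGroup M] [Module k M]
    (φ : L →ₗ⁅k⁆ Module.End k M)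
    (x : L) (v : M) (x' : L)
    (hx' : ∀ z : L, ⁅x', z⁆ = (LieAlgebra.ad k L x ^ p) z)
    (hφx' : φ x' = φ x ^ p) :
    ∀ (y : L) (w : M) (ys : ℕ → L) (ms : ℕ → M),
      ys 0 = y → ms 0 = w →
      (∀ n, ys (n + 1) = ⁅x, ys n⁆) →
      (∀ n, ms (n + 1) = φ x (ms n) - φ (ys n) v) →
      ys p = ⁅x', y⁆ ∧ ms p = φ x' w - φ y ((φ x ^ (p - 1)) v) := by
  intro y w ys ms hy0 hm0 hys hms
  have : Fact p.Prime := ⟨hp⟩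
  have hys_eq (n : ℕ) : ys n = (LieAlgebra.ad k L x ^ n) y := by
    induction n with
    | zero => exact hy0
    | succ n ih => rw [hys, ih, pow_succ', Module.End.mul_apply, LieAlgebra.ad_apply]
  have hms_eq (n : ℕ) : (LieAlgebra.ad k _ (affineEnd (φ x) v) ^ n) (affineEnd (φ y) w) =
      affineEnd (φ (ys n)) (ms n) := by
    induction n with
    | zero => rw [pow_zero, Module.End.one_apply, hy0, hm0]
    | succ n ih =>
      rw [pow_succ', Module.End.mul_apply, ih, LieAlgebra.ad_apply, lie_affineEnd, hys, hms,
        LieHom.map_lie]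
  have hmp : affineEnd (φ (ys p)) (ms p) =
      affineEnd ⁅φ x', φ y⁆ (φ x' w - φ y ((φ x ^ (p - 1)) v)) := by
    rw [← hms_eq, LieAlgebra.ad_pow_char, LieAlgebra.ad_apply, affineEnd_pow _ _ hp.ne_zero,
      lie_affineEnd, hφx']
  exact ⟨by rw [hys_eq, hx'], affineEnd_injective_right hmp⟩

/-- Key computation for the restricted semidirect product: if `x' ∈ L` satisfies
`⁅x', z⁆ = (ad x)^p z` for all `z` and `φ x' = φ(x)^p`, then the `p`-th iterated
adjoint action of `(x, v)` on `L ⋉ M` is given by `y_p = ⁅x', y⁆` and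
`m_p = φ(x') w − φ(y) (φ(x)^{p-1} v)`, i.e. `ad_{(x,v)}^p = ad_{(x', φ(x)^{p-1} v)}`. -/
theorem stmt4 {k : Type*} [Field k] {p : ℕ} (hp : p.Prime) (hp3 : 3 ≤ p) [CharP k p]
    {L : Type*} [LieRing L] [LieAlgebra k L]
    {M : Type*} [AddCommGroup M] [Module k M]
    (φ : L →ₗ⁅k⁆ Module.End k M)
    (x : L) (v : M) (x' : L)
    (hx' : ∀ z : L, ⁅x', z⁆ = (LieAlgebra.ad k L x ^ p) z)
    (hφx' : φ x' = φ x ^ p) :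
    ∀ (y : L) (w : M) (ys : ℕ → L) (ms : ℕ → M),
      ys 0 = y → ms 0 = w →
      (∀ n, ys (n + 1) = ⁅x, ys n⁆) →
      (∀ n, ms (n + 1) = φ x (ms n) - φ (ys n) v) →
      ys p = ⁅x', y⁆ ∧ ms p = φ x' w - φ y ((φ x ^ (p - 1)) v) :=
  stmt4_general hp φ x v x' hx' hφx'
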